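/- Let d ≥ 2 be an integer, b(i) = −i^{2d} and a(i) = i^d + (i+1)^d. Then the finite continued fraction K_{i=1}^{n} b(i)/a(i) equals 1/(Σ_{k=0}^{n} 1/(k+1)^d) − 1, and consequently 1/(1 + K_{i=1}^{∞} b(i)/a(i)) = ζ(d). -/

import Mathlib

/-- Finite generalized continued fraction `K_{i=start}^{start+count-1} b i / a i`. -/
noncomputable def gcfK (b a : ℕ → ℝ) : ℕ → ℕ → ℝ
  | _, 0 => 0
  | s, n + 1 => b s / (a s + gcfK b a (s + 1) n)

lemma gcfK_alg (x y S : ℝ) (hx : 0 < x) (hS : 0 < S) :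
    -x ^ 2 / (x + y + (1 / S - y)) = 1 / (1 / x + S) - x := by
  have h : x + y + (1 / S - y) = x + 1 / S := by ring
  rw [h]
  have h1 : x + 1 / S ≠ 0 := by positivity
  have h2 : 1 / x + S ≠ 0 := by positivity
  field_simp
  ring

lemma gcfK_aux (d : ℕ) (b a : ℕ → ℝ)
    (hb : ∀ i, b i = -((i : ℝ) ^ (2 * d)))
    (ha : ∀ i, a i = (i : ℝ) ^ d + ((i : ℝ) + 1) ^ d) :
    ∀ n s : ℕ, 1 ≤ s →
      gcfK b a s n =
        1 / (∑ k ∈ Finset.range (n + 1), 1 / (((k + s : ℕ) : ℝ)) ^ d) - (s : ℝ) ^ d := by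
  intro n
  induction n with
  | zero =>
    intro s hs
    have hs' : (0 : ℝ) < (s : ℝ) ^ d := by
      have : (0 : ℝ) < (s : ℝ) := by exact_mod_cast hs
      positivity
    simp [gcfK, one_div_one_div, hs'.ne']
  | succ n ih =>
    intro s hs
    have hspos : (0 : ℝ) < (s : ℝ) := by exact_mod_cast hs
    have hx : (0 : ℝ) < (s : ℝ) ^ d := by positivity
    have hS1pos : 0 < ∑ k ∈ Finset.range (n + 1), 1 / (((k + (s + 1) : ℕ) : ℝ)) ^ d := by
      apply Finset.sum_pos
      · intro k _
        have : (0 : ℝ) < ((k + (s + 1) : ℕ) : ℝ) := by positivity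
        positivity
      · exact ⟨0, Finset.mem_range.mpr (Nat.succ_pos n)⟩
    have hsum : ∑ k ∈ Finset.range (n + 1 + 1), 1 / (((k + s : ℕ) : ℝ)) ^ d
        = 1 / (s : ℝ) ^ d + ∑ k ∈ Finset.range (n + 1), 1 / (((k + (s + 1) : ℕ) : ℝ)) ^ d := by
      rw [Finset.sum_range_succ' (fun k => 1 / (((k + s : ℕ) : ℝ)) ^ d) (n + 1), add_comm]
      congr 1
      · norm_num
      · exact Finset.sum_congr rfl fun k _ => by rw [show k + 1 + s = k + (s + 1) from by omega]
    have hc : (((s + 1 : ℕ)) : ℝ) = (s : ℝ) + 1 := by push_cast; ring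
    have h2d : ((s : ℝ)) ^ (2 * d) = ((s : ℝ) ^ d) ^ 2 := by rw [pow_mul']
    show b s / (a s + gcfK b a (s + 1) n) = _
    rw [ih (s + 1) (by omega), hb, ha, hsum, hc, h2d]
    exact gcfK_alg _ _ _ hx hS1pos

theorem stmt_3 (d : ℕ) (hd : 2 ≤ d) (b a : ℕ → ℝ)
    (hb : ∀ i, b i = -((i : ℝ) ^ (2 * d)))
    (ha : ∀ i, a i = (i : ℝ) ^ d + ((i : ℝ) + 1) ^ d) :
    (∀ n : ℕ, gcfK b a 1 n =
        1 / (∑ k ∈ Finset.range (n + 1), 1 / ((k : ℝ) + 1) ^ d) - 1) ∧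
      Filter.Tendsto (fun n => 1 / (1 + gcfK b a 1 n)) Filter.atTop
        (nhds (∑' n : ℕ, 1 / ((n : ℝ) + 1) ^ d)) := by
  have key : ∀ n : ℕ, gcfK b a 1 n =
      1 / (∑ k ∈ Finset.range (n + 1), 1 / ((k : ℝ) + 1) ^ d) - 1 := by
    intro n
    have := gcfK_aux d b a hb ha n 1 le_rfl
    simpa [Nat.cast_add] using this
  refine ⟨key, ?_⟩
  have hpos : ∀ n : ℕ, 0 < ∑ k ∈ Finset.range (n + 1), 1 / ((k : ℝ) + 1) ^ d := by
    intro n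
    apply Finset.sum_pos
    · intro k _; positivity
    · exact ⟨0, Finset.mem_range.mpr (Nat.succ_pos n)⟩
  have heq : ∀ n : ℕ, 1 / (1 + gcfK b a 1 n)
      = ∑ k ∈ Finset.range (n + 1), 1 / ((k : ℝ) + 1) ^ d := by
    intro n
    rw [key n]
    have h := (hpos n).ne'
    field_simp
    ring
  have hsummable : Summable (fun n : ℕ => 1 / ((n : ℝ) + 1) ^ d) := by
    have h : Summable (fun n : ℕ => 1 / ((n : ℝ)) ^ d) :=
      (Real.summable_one_div_nat_pow).mpr (by omega)
    have := (summable_nat_add_iff 1).mpr h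
    simpa using this
  have htend := hsummable.hasSum.tendsto_sum_nat
  have htend' := htend.comp (Filter.tendsto_add_atTop_nat 1)
  convert htend' using 1
  funext n
  simp [heq n]
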